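/- arXiv:1608.07863 — 3 statements merged into one kernel-verified Lean document; each statement's English description precedes it below -/
import Mathlib

section
/- Let a, b, D, βε > 0 and n ∈ ℕ with βε ≤ a/(2n). For t ∈ (0, e^{−3βε}], set λ(t) = ln(1/t)/(2βε) (so λ(t) ≥ 3/2 > 1). Then exp(λ(t) b t + (λ(t)²/2) D t (1 + e^{λ(t) βε}) − λ(t) a) ≤ exp(b/(2eβε) + 4D/(e² βε²)) · tⁿ. -/
set_option maxHeartbeats 1000000

lemma log_le_div_e' {y : ℝ} (hy : 0 < y) : Real.log y ≤ y / Real.exp 1 := by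
  have h := Real.log_le_sub_one_of_pos (show 0 < y / Real.exp 1 by positivity)
  rw [Real.log_div hy.ne' (Real.exp_ne_zero 1), Real.log_exp] at h
  linarith

lemma mul_log_inv_le' {x : ℝ} (hx : 0 < x) : x * Real.log (1 / x) ≤ 1 / Real.exp 1 := by
  have h := log_le_div_e' (show (0:ℝ) < 1 / x by positivity)
  calc x * Real.log (1 / x) ≤ x * ((1 / x) / Real.exp 1) :=
        mul_le_mul_of_nonneg_left h hx.le
    _ = 1 / Real.exp 1 := by field_simp

/-- The deterministic optimization behind the bound `I₁(t) = O(tⁿ)`: with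
`λ(t) = ln(1/t)/(2βε)` and `βε ≤ a/(2n)`, for `t ∈ (0, e^{−3βε}]`,
`exp(λbt + (λ²/2)Dt(1 + e^{λβε}) − λa) ≤ exp(b/(2eβε) + 4D/(e²βε²)) tⁿ`. -/
theorem stmt12 (a b D βε : ℝ) (n : ℕ) (ha : 0 < a) (hb : 0 < b) (hD : 0 < D)
    (hβε : 0 < βε) (hn : βε ≤ a / (2 * n)) :
    ∀ t : ℝ, t ∈ Set.Ioc 0 (Real.exp (-3 * βε)) →
      Real.exp ((Real.log (1 / t) / (2 * βε)) * b * t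
          + (Real.log (1 / t) / (2 * βε)) ^ 2 / 2 * D * t
            * (1 + Real.exp ((Real.log (1 / t) / (2 * βε)) * βε))
          - (Real.log (1 / t) / (2 * βε)) * a)
        ≤ Real.exp (b / (2 * Real.exp 1 * βε) + 4 * D / (Real.exp 1 ^ 2 * βε ^ 2))
            * t ^ n := by
  intro t ht
  obtain ⟨ht0, ht1⟩ := ht
  have he : (0:ℝ) < Real.exp 1 := Real.exp_pos 1
  have htle1 : t ≤ 1 := ht1.trans (by rw [Real.exp_le_one_iff]; nlinarith)
  set L := Real.log (1 / t) with hLdef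
  have hLlog : L = -Real.log t := by rw [hLdef, one_div, Real.log_inv]
  have hL0 : 0 ≤ L := Real.log_nonneg (one_le_one_div ht0 htle1)
  have hteq : Real.exp (-L) = t := by rw [hLlog, neg_neg, Real.exp_log ht0]
  have hLt : t * L ≤ 1 / Real.exp 1 := mul_log_inv_le' ht0
  set s := Real.exp (-(L / 4)) with hsdef
  have hs0 : 0 < s := Real.exp_pos _
  have hs1 : s ≤ 1 := by rw [hsdef, Real.exp_le_one_iff]; linarith
  have hts : t = s ^ 4 := by
    rw [hsdef, ← Real.exp_nat_mul, ← hteq]; congr 1; push_cast; ring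
  have hts2 : t * Real.exp (L / 2) = s ^ 2 := by
    rw [hsdef, ← Real.exp_nat_mul, ← hteq, ← Real.exp_add]; congr 1; push_cast; ring
  have hlogs : Real.log s = -(L / 4) := by rw [hsdef, Real.log_exp]
  have hltL : Real.log t = -L := by rw [hLlog]; ring
  clear_value s L
  clear hLdef hsdef hLlog
  have hsls_lb : -(1 / Real.exp 1) ≤ s * Real.log s := by
    have h := mul_log_inv_le' hs0
    have h2 : s * Real.log (1 / s) = -(s * Real.log s) := by
      rw [one_div, Real.log_inv]; ring
    rw [h2] at h; linarith
  have hsls_ub : s * Real.log s ≤ 0 :=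
    mul_nonpos_of_nonneg_of_nonpos hs0.le (Real.log_nonpos hs0.le hs1)
  have hsq : (s * Real.log s) ^ 2 ≤ (1 / Real.exp 1) ^ 2 := by nlinarith
  have hL2s2 : L ^ 2 * s ^ 2 ≤ 16 / Real.exp 1 ^ 2 := by
    have hL : L = -(4 * Real.log s) := by rw [hlogs]; ring
    calc L ^ 2 * s ^ 2 = 16 * (s * Real.log s) ^ 2 := by rw [hL]; ring
      _ ≤ 16 * (1 / Real.exp 1) ^ 2 := by nlinarith
      _ = 16 / Real.exp 1 ^ 2 := by
          rw [div_pow, one_pow]; ring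
  have hs42 : s ^ 4 ≤ s ^ 2 := by nlinarith
  have key : L ^ 2 * (t + t * Real.exp (L / 2)) ≤ 32 / Real.exp 1 ^ 2 := by
    rw [hts2, hts]
    have h1 : L ^ 2 * s ^ 4 ≤ L ^ 2 * s ^ 2 :=
      mul_le_mul_of_nonneg_left hs42 (sq_nonneg L)
    calc L ^ 2 * (s ^ 4 + s ^ 2) = L ^ 2 * s ^ 4 + L ^ 2 * s ^ 2 := by ring
      _ ≤ 16 / Real.exp 1 ^ 2 + 16 / Real.exp 1 ^ 2 := by linarith
      _ = 32 / Real.exp 1 ^ 2 := by ring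
  -- bound for first term
  have hA : L / (2 * βε) * b * t ≤ b / (2 * Real.exp 1 * βε) := by
    calc L / (2 * βε) * b * t = b / (2 * βε) * (t * L) := by ring
      _ ≤ b / (2 * βε) * (1 / Real.exp 1) :=
          mul_le_mul_of_nonneg_left hLt (by positivity)
      _ = b / (2 * Real.exp 1 * βε) := by
          rw [div_mul_div_comm, mul_one, mul_comm (2 * βε)]; ring_nf
  -- bound for second term
  have hB : (L / (2 * βε)) ^ 2 / 2 * D * t * (1 + Real.exp (L / 2))
      ≤ 4 * D / (Real.exp 1 ^ 2 * βε ^ 2) := by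
    have e1 : (L / (2 * βε)) ^ 2 / 2 * D * t * (1 + Real.exp (L / 2))
        = D / (8 * βε ^ 2) * (L ^ 2 * (t + t * Real.exp (L / 2))) := by
      field_simp
      ring
    rw [e1]
    calc D / (8 * βε ^ 2) * (L ^ 2 * (t + t * Real.exp (L / 2)))
        ≤ D / (8 * βε ^ 2) * (32 / Real.exp 1 ^ 2) :=
          mul_le_mul_of_nonneg_left key (by positivity)
      _ = 4 * D / (Real.exp 1 ^ 2 * βε ^ 2) := by
          field_simp
          ring
  -- bound for third term
  have hna : (n : ℝ) ≤ a / (2 * βε) := by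
    have h2 : 2 * (n : ℝ) * βε ≤ a := by
      rcases Nat.eq_zero_or_pos n with h | h
      · simp [h]; linarith
      · have hpos : (0:ℝ) < 2 * n := by positivity
        rw [le_div_iff₀ hpos] at hn; linarith
    rw [le_div_iff₀ (by positivity : (0:ℝ) < 2 * βε)]; linarith
  have hC : -(L / (2 * βε) * a) ≤ (n : ℝ) * Real.log t := by
    rw [hltL]
    have h3 := mul_le_mul_of_nonneg_right hna hL0
    have h4 : a / (2 * βε) * L = L / (2 * βε) * a := by ring
    rw [h4] at h3
    have h5 : (n : ℝ) * -L = -((n : ℝ) * L) := by ring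
    rw [h5]
    linarith
  -- assemble
  have harg : L / (2 * βε) * βε = L / 2 := by field_simp
  rw [harg]
  have htn : t ^ n = Real.exp ((n : ℝ) * Real.log t) := by
    rw [Real.exp_nat_mul, Real.exp_log ht0]
  rw [htn, ← Real.exp_add, Real.exp_le_exp]
  linarith
end

section
/- Fix x ∈ ℝ and K > 0 with K ≠ e^x, and set a = ln K − x ≠ 0. With C_BS(s) = e^x Φ((x − ln K)/s + s/2) − K Φ((x − ln K)/s − s/2) (Black–Scholes price with unit maturity and volatility s, zero rates), one has lim_{s→0⁺} [C_BS(s) − (e^x − K)^+] / [ (K s³ / (√(2π) a²)) · exp(−a²/(2s²) − a/2) ] = 1. -/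
open MeasureTheory

/-- The standard normal CDF. -/
noncomputable def Phi (y : ℝ) : ℝ :=
  (Real.sqrt (2 * Real.pi))⁻¹ * ∫ u in Set.Iic y, Real.exp (-u ^ 2 / 2)

/-- Black–Scholes call price with zero rates, unit maturity and volatility `s`. -/
noncomputable def CBS1 (x K s : ℝ) : ℝ :=
  Real.exp x * Phi ((x - Real.log K) / s + s / 2)
    - K * Phi ((x - Real.log K) / s - s / 2)

/-!
Write `a = ln K − x`, `d± = (x − ln K)/s ± s/2` and `φ = Φ'`. Both `C_BS(s) − (e^x − K)⁺` and
the leading term vanish as `s → 0⁺`, so l'Hôpital's rule applies. Since `e^x φ(d₊) = K φ(d₋)`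
and `d₊ − d₋ = s`, the `s`-derivative of the price is the vega `K φ(d₋)`, while the leading
term has derivative `K (3s² + a²) exp(−a²/(2s²) − a/2) / (√(2π) a²)`. Completing the square,
`φ(d₋) = exp(−a²/(2s²) − a/2 − s²/8) / √(2π)`, so the ratio of derivatives is
`a² e^{−s²/8} / (3s² + a²) → 1`.
-/

open Real Filter Set Topology ProbabilityTheory

lemma gaussianPDFReal_zero_one (u : ℝ) :
    gaussianPDFReal 0 1 u = (√(2 * π))⁻¹ * exp (-u ^ 2 / 2) := by
  simp [gaussianPDFReal]

lemma Phi_eq_cdf_gaussianReal : Phi = cdf (gaussianReal 0 1) := by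
  ext y
  rw [cdf_eq_real, measureReal_def, gaussianReal_apply_eq_integral _ one_ne_zero,
    ENNReal.toReal_ofReal
      (setIntegral_nonneg measurableSet_Iic fun u _ => gaussianPDFReal_nonneg _ _ u)]
  simp only [gaussianPDFReal_zero_one, integral_const_mul, Phi]

lemma tendsto_Phi_atTop : Tendsto Phi atTop (𝓝 1) :=
  Phi_eq_cdf_gaussianReal ▸ tendsto_cdf_atTop _

lemma tendsto_Phi_atBot : Tendsto Phi atBot (𝓝 0) :=
  Phi_eq_cdf_gaussianReal ▸ tendsto_cdf_atBot _

lemma hasDerivAt_Phi (y : ℝ) : HasDerivAt Phi ((√(2 * π))⁻¹ * exp (-y ^ 2 / 2)) y := by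
  have hint : Integrable fun u : ℝ => exp (-u ^ 2 / 2) := by
    simpa [neg_div, div_eq_inv_mul] using integrable_exp_neg_mul_sq (b := 1 / 2) (by norm_num)
  have hPhi : Phi = fun y => Phi 0 + (√(2 * π))⁻¹ * ∫ u in (0 : ℝ)..y, exp (-u ^ 2 / 2) := by
    ext y
    rw [← intervalIntegral.integral_Iic_sub_Iic hint.integrableOn hint.integrableOn, Phi, Phi]
    ring
  have hcont : Continuous fun u : ℝ => exp (-u ^ 2 / 2) := by fun_prop
  rw [hPhi]
  exact (((hcont.integral_hasStrictDerivAt 0 y).hasDerivAt).const_mul _).const_add _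

lemma exp_mul_exp_neg_sq_add_half (x L : ℝ) {s : ℝ} (hs : s ≠ 0) :
    exp x * exp (-((x - L) / s + s / 2) ^ 2 / 2)
      = exp L * exp (-((x - L) / s - s / 2) ^ 2 / 2) := by
  rw [← exp_add, ← exp_add]
  congr 1
  field_simp
  ring

lemma exp_neg_sq_sub_half (x L : ℝ) {s : ℝ} (hs : s ≠ 0) :
    exp (-((x - L) / s - s / 2) ^ 2 / 2)
      = exp (-(L - x) ^ 2 / (2 * s ^ 2) - (L - x) / 2) * exp (-s ^ 2 / 8) := by
  rw [← exp_add]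
  congr 1
  field_simp
  ring

lemma hasDerivAt_CBS1 (x : ℝ) {K s : ℝ} (hK : 0 < K) (hs : s ≠ 0) :
    HasDerivAt (CBS1 x K)
      (K * ((√(2 * π))⁻¹ * exp (-((x - log K) / s - s / 2) ^ 2 / 2))) s := by
  have hinv : HasDerivAt (fun t => (x - log K) / t) ((x - log K) * -(s ^ 2)⁻¹) s := by
    simpa only [div_eq_mul_inv] using (hasDerivAt_inv hs).const_mul (x - log K)
  have hhalf : HasDerivAt (fun t : ℝ => t / 2) (1 / 2) s := (hasDerivAt_id s).div_const 2
  refine ((((hasDerivAt_Phi ((x - log K) / s + s / 2)).comp s (hinv.add hhalf)).const_mul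
    (exp x)).sub (((hasDerivAt_Phi ((x - log K) / s - s / 2)).comp s (hinv.sub hhalf)).const_mul
    K)).congr_deriv ?_
  have key := exp_mul_exp_neg_sq_add_half x (log K) hs
  rw [exp_log hK] at key
  linear_combination ((√(2 * π))⁻¹ * ((x - log K) * -(s ^ 2)⁻¹ + 1 / 2)) * key

lemma tendsto_const_div_nhdsGT_zero_atTop {m : ℝ} (hm : 0 < m) :
    Tendsto (fun s : ℝ => m / s) (𝓝[>] 0) atTop := by
  simpa only [div_eq_mul_inv] using tendsto_inv_nhdsGT_zero.const_mul_atTop hm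

lemma tendsto_const_div_nhdsGT_zero_atBot {m : ℝ} (hm : m < 0) :
    Tendsto (fun s : ℝ => m / s) (𝓝[>] 0) atBot := by
  simpa only [div_eq_mul_inv] using tendsto_inv_nhdsGT_zero.const_mul_atTop_of_neg hm

lemma tendsto_CBS1_nhdsGT_zero {x K : ℝ} (hK : 0 < K) (hKx : K ≠ exp x) :
    Tendsto (CBS1 x K) (𝓝[>] 0) (𝓝 (max (exp x - K) 0)) := by
  have hhalf : Tendsto (fun s : ℝ => s / 2) (𝓝[>] 0) (𝓝 0) := by
    have : Tendsto (fun s : ℝ => s / 2) (𝓝 0) (𝓝 0) := by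
      simpa using (continuous_id.div_const (2 : ℝ)).tendsto 0
    exact this.mono_left nhdsWithin_le_nhds
  rcases lt_or_gt_of_ne (sub_ne_zero.2 (show x ≠ log K by rintro rfl; simp [exp_log hK] at hKx))
    with hm | hm
  · have hd := tendsto_const_div_nhdsGT_zero_atBot hm
    have hdm : Tendsto (fun s => (x - log K) / s - s / 2) (𝓝[>] 0) atBot := by
      simpa only [sub_eq_add_neg] using hd.atBot_add hhalf.neg
    rw [max_eq_right (by linarith [(lt_log_iff_exp_lt hK).1 (sub_neg.1 hm)])]
    have := ((tendsto_Phi_atBot.comp (hd.atBot_add hhalf)).const_mul (exp x)).sub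
      ((tendsto_Phi_atBot.comp hdm).const_mul K)
    rwa [mul_zero, mul_zero, sub_zero] at this
  · have hd := tendsto_const_div_nhdsGT_zero_atTop hm
    have hdm : Tendsto (fun s => (x - log K) / s - s / 2) (𝓝[>] 0) atTop := by
      simpa only [sub_eq_add_neg] using hd.atTop_add hhalf.neg
    rw [max_eq_left (by linarith [(log_lt_iff_lt_exp hK).1 (sub_pos.1 hm)])]
    have := ((tendsto_Phi_atTop.comp (hd.atTop_add hhalf)).const_mul (exp x)).sub
      ((tendsto_Phi_atTop.comp hdm).const_mul K)
    rwa [mul_one, mul_one] at this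

noncomputable def bsLeading (K a s : ℝ) : ℝ :=
  K * s ^ 3 / (√(2 * π) * a ^ 2) * exp (-a ^ 2 / (2 * s ^ 2) - a / 2)

lemma hasDerivAt_bsLeading (K a : ℝ) {s : ℝ} (hs : s ≠ 0) :
    HasDerivAt (bsLeading K a)
      (K / (√(2 * π) * a ^ 2) * (3 * s ^ 2 + a ^ 2) * exp (-a ^ 2 / (2 * s ^ 2) - a / 2)) s := by
  have hexponent : HasDerivAt (fun t : ℝ => -a ^ 2 / (2 * t ^ 2) - a / 2) (a ^ 2 / s ^ 3) s := by
    refine (((hasDerivAt_const s (-a ^ 2)).div ((hasDerivAt_pow 2 s).const_mul 2)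
      (by positivity)).sub_const (a / 2)).congr_deriv ?_
    field_simp
    ring
  refine ((((hasDerivAt_pow 3 s).const_mul K).div_const _).mul hexponent.exp).congr_deriv ?_
  field_simp
  ring

lemma tendsto_bsLeading_nhdsGT_zero (K a : ℝ) : Tendsto (bsLeading K a) (𝓝[>] 0) (𝓝 0) := by
  have hpoly : Tendsto (fun s : ℝ => K * s ^ 3 / (√(2 * π) * a ^ 2)) (𝓝[>] 0) (𝓝 0) := by
    have : Tendsto (fun s : ℝ => K * s ^ 3 / (√(2 * π) * a ^ 2)) (𝓝 0) (𝓝 0) := by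
      simpa using ((continuous_const.mul (continuous_pow 3)).div_const _).tendsto (0 : ℝ)
    exact this.mono_left nhdsWithin_le_nhds
  refine hpoly.zero_mul_isBoundedUnder_le (isBoundedUnder_of ⟨exp (-a / 2), fun s => ?_⟩)
  simp only [Function.comp_apply, norm_eq_abs, abs_exp, exp_le_exp]
  have : 0 ≤ a ^ 2 / (2 * s ^ 2) := by positivity
  rw [neg_div]
  linarith

/-- Leading term of the small-volatility expansion of the not-at-the-money
Black–Scholes price: with `a = ln K − x ≠ 0`,
`C_BS(s) − (e^x − K)⁺ ∼ (K s³/(√(2π)a²)) exp(−a²/(2s²) − a/2)` as `s → 0⁺`. -/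
theorem stmt17 (x K : ℝ) (hK : 0 < K) (hKx : K ≠ Real.exp x) :
    Filter.Tendsto
      (fun s =>
        (CBS1 x K s - max (Real.exp x - K) 0) /
          (K * s ^ 3 / (Real.sqrt (2 * Real.pi) * (Real.log K - x) ^ 2)
            * Real.exp (-(Real.log K - x) ^ 2 / (2 * s ^ 2) - (Real.log K - x) / 2)))
      (nhdsWithin 0 (Set.Ioi 0)) (nhds 1) := by
  set a := log K - x with ha_def
  have ha : a ≠ 0 := sub_ne_zero.2 fun h => hKx (by rw [← h, exp_log hK])
  have hnum : Tendsto (fun s => CBS1 x K s - max (exp x - K) 0) (𝓝[>] 0) (𝓝 0) := by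
    simpa using (tendsto_CBS1_nhdsGT_zero hK hKx).sub_const (max (exp x - K) 0)
  refine HasDerivAt.lhopital_zero_right_on_Ioo (b := 1) one_pos
    (fun s hs => (hasDerivAt_CBS1 x hK hs.1.ne').sub_const _)
    (fun s hs => hasDerivAt_bsLeading K a hs.1.ne') (fun s _ => by positivity) hnum
    (tendsto_bsLeading_nhdsGT_zero K a) ?_
  have hratio : ∀ s ∈ Ioi (0 : ℝ), a ^ 2 * exp (-s ^ 2 / 8) / (3 * s ^ 2 + a ^ 2) =
      K * ((√(2 * π))⁻¹ * exp (-((x - log K) / s - s / 2) ^ 2 / 2)) /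
        (K / (√(2 * π) * a ^ 2) * (3 * s ^ 2 + a ^ 2) * exp (-a ^ 2 / (2 * s ^ 2) - a / 2)) := by
    intro s hs
    rw [exp_neg_sq_sub_half x (log K) (ne_of_gt hs), ← ha_def]
    field_simp
  have hlim :
      Tendsto (fun s : ℝ => a ^ 2 * exp (-s ^ 2 / 8) / (3 * s ^ 2 + a ^ 2)) (𝓝 0) (𝓝 1) := by
    have : ContinuousAt (fun s : ℝ => a ^ 2 * exp (-s ^ 2 / 8) / (3 * s ^ 2 + a ^ 2)) 0 := by
      fun_prop (disch := positivity)
    simpa [ha] using this.tendsto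
  exact (tendsto_nhdsWithin_of_tendsto_nhds hlim).congr' (eventually_mem_nhdsWithin.mono hratio)
end

section
/- Let a ≠ 0 and b > 0 be real constants, and let v : (0, t₀) → (0, ∞) satisfy t·v(t) → 0 as t → 0⁺ and (t v(t))^{3/2} exp(−a²/(2 t v(t))) / (b t) → 1 as t → 0⁺. Then lim_{t→0⁺} 2 t v(t) ln(1/t) = a², i.e., v(t) ~ a² / (2 t ln(1/t)) as t → 0⁺. -/
/-!
With `u = t v(t)`, taking logarithms turns the second hypothesis into
`(3/2) log u - a²/(2u) - log b - log t → 0`. Multiplying by `2u → 0` and using `u log u → 0`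
leaves `-a² - 2u log t → 0`.
-/

open Filter Real Topology

lemma log_rpow_mul_exp_div {u d : ℝ} (hu : 0 < u) (hd : 0 < d) (p y : ℝ) :
    log (u ^ p * exp y / d) = p * log u + y - log d := by
  rw [log_div (by positivity) hd.ne', log_mul (by positivity) (exp_ne_zero y), log_rpow hu,
    log_exp]

lemma tendsto_mul_of_tendsto_mul_log_sub_div_sub {α : Type*} {l : Filter α} {u w : α → ℝ}
    {p c k : ℝ} (hu : Tendsto u l (𝓝 0)) (hu0 : ∀ᶠ x in l, u x ≠ 0)
    (h : Tendsto (fun x => p * log (u x) - c / u x - w x) l (𝓝 k)) :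
    Tendsto (fun x => u x * w x) l (𝓝 (-c)) := by
  have hulogu : Tendsto (fun x => u x * log (u x)) l (𝓝 0) := by
    simpa [Function.comp_def] using (continuous_mul_log.tendsto 0).comp hu
  have hlim := ((hulogu.const_mul p).sub_const c).sub (hu.mul h)
  simp only [mul_zero, zero_mul, zero_sub, sub_zero] at hlim
  refine hlim.congr' ?_
  filter_upwards [hu0] with x hx
  field_simp
  ring

theorem stmt18_general (a b t₀ : ℝ) (hb : 0 < b) (ht₀ : 0 < t₀)
    (v : ℝ → ℝ) (hv : ∀ t ∈ Set.Ioo 0 t₀, 0 < v t)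
    (h1 : Filter.Tendsto (fun t => t * v t) (nhdsWithin 0 (Set.Ioi 0)) (nhds 0))
    (h2 : Filter.Tendsto
      (fun t => (t * v t) ^ ((3 : ℝ) / 2) * Real.exp (-a ^ 2 / (2 * (t * v t))) / (b * t))
      (nhdsWithin 0 (Set.Ioi 0)) (nhds 1)) :
    Filter.Tendsto (fun t => 2 * t * v t * Real.log (1 / t))
      (nhdsWithin 0 (Set.Ioi 0)) (nhds (a ^ 2)) := by
  have hpos : ∀ᶠ t in 𝓝[>] (0 : ℝ), 0 < t ∧ 0 < t * v t := by
    filter_upwards [Ioo_mem_nhdsGT ht₀] with t ht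
    exact ⟨ht.1, mul_pos ht.1 (hv t ht)⟩
  have hlog : Tendsto (fun t => 3 / 2 * log (t * v t) - a ^ 2 / 2 / (t * v t) - log t)
      (𝓝[>] 0) (𝓝 (log b)) := by
    have hlim := (h2.log one_ne_zero).add_const (log b)
    rw [log_one, zero_add] at hlim
    refine hlim.congr' ?_
    filter_upwards [hpos] with t ⟨ht, hu⟩
    rw [log_rpow_mul_exp_div hu (mul_pos hb ht), log_mul hb.ne' ht.ne']
    ring
  have hulog := (tendsto_mul_of_tendsto_mul_log_sub_div_sub h1
    (hpos.mono fun t h => h.2.ne') hlog).const_mul (-2)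
  rw [show -2 * -(a ^ 2 / 2) = a ^ 2 by ring] at hulog
  refine hulog.congr' ?_
  filter_upwards [hpos] with t _
  rw [one_div, log_inv]
  ring

/-- Asymptotic inversion giving the first-order implied volatility: if `tv(t) → 0` and
`(tv(t))^{3/2} e^{−a²/(2tv(t))}/(bt) → 1` as `t → 0⁺`, then
`2 t v(t) ln(1/t) → a²`, i.e. `v(t) ∼ a²/(2t ln(1/t))`. -/
theorem stmt18 (a b t₀ : ℝ) (ha : a ≠ 0) (hb : 0 < b) (ht₀ : 0 < t₀)
    (v : ℝ → ℝ) (hv : ∀ t ∈ Set.Ioo 0 t₀, 0 < v t)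
    (h1 : Filter.Tendsto (fun t => t * v t) (nhdsWithin 0 (Set.Ioi 0)) (nhds 0))
    (h2 : Filter.Tendsto
      (fun t => (t * v t) ^ ((3 : ℝ) / 2) * Real.exp (-a ^ 2 / (2 * (t * v t))) / (b * t))
      (nhdsWithin 0 (Set.Ioi 0)) (nhds 1)) :
    Filter.Tendsto (fun t => 2 * t * v t * Real.log (1 / t))
      (nhdsWithin 0 (Set.Ioi 0)) (nhds (a ^ 2)) :=
  stmt18_general a b t₀ hb ht₀ v hv h1 h2
end
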